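/- For every n, if the simplex Δ_{n−1} on n vertices collapses to a complex Y of dimension exactly 1, then Y has at least one free face. In other words, no collapsing sequence of the simplex gets stuck at dimension 1. -/

import Mathlib

/-- A simplicial complex: a collection of finite subsets of the vertex type,
closed under taking subsets. -/
def IsComplex {V : Type*} [DecidableEq V] (X : Set (Finset V)) : Prop :=
  ∀ σ ∈ X, ∀ τ : Finset V, τ ⊆ σ → τ ∈ X

/-- `τ` is a free face of `X`, with `σ` the unique face of `X` properly containing `τ`. -/
def IsFreeFace {V : Type*} [DecidableEq V] (X : Set (Finset V)) (τ σ : Finset V) : Prop :=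
  τ ∈ X ∧ τ.Nonempty ∧ σ ∈ X ∧ τ ⊂ σ ∧ ∀ ρ ∈ X, τ ⊂ ρ → ρ = σ

/-- `X` has a free face. -/
def HasFreeFace {V : Type*} [DecidableEq V] (X : Set (Finset V)) : Prop :=
  ∃ τ σ, IsFreeFace X τ σ

/-- An elementary collapse: remove a free face `τ` together with the unique face `σ`
properly containing it. -/
def CollapseStep {V : Type*} [DecidableEq V] (X Y : Set (Finset V)) : Prop :=
  ∃ τ σ, IsFreeFace X τ σ ∧ Y = X \ {τ, σ}

/-- `X` collapses to `Y` via a finite sequence of elementary collapses. -/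
def CollapsesTo {V : Type*} [DecidableEq V] (X Y : Set (Finset V)) : Prop :=
  Relation.ReflTransGen CollapseStep X Y

/-- `X` has dimension exactly `d`: some face has `d + 1` vertices, and
every face has at most `d + 1` vertices. -/
def Dim {V : Type*} [DecidableEq V] (X : Set (Finset V)) (d : ℕ) : Prop :=
  (∃ σ ∈ X, σ.card = d + 1) ∧ ∀ σ ∈ X, σ.card ≤ d + 1

/-!
Elementary collapses preserve being a simplicial complex, connectivity of the 1-skeleton and the
reduced Euler characteristic, which vanishes on the full simplex. In a connected 1-dimensional
complex every vertex lies on an edge; if no face is free, every vertex even lies on two edges.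
Double counting vertex–edge incidences then gives at least as many edges as vertices, so the
reduced Euler characteristic `-1 + #vertices - #edges` is negative, a contradiction.
-/

section

variable {V : Type*} [DecidableEq V] {X Y : Set (Finset V)}

def oneSkeleton (X : Set (Finset V)) : SimpleGraph V where
  Adj u v := u ≠ v ∧ {u, v} ∈ X
  symm := ⟨fun u v h => ⟨h.1.symm, Finset.pair_comm u v ▸ h.2⟩⟩
  loopless := ⟨fun _ h => h.1 rfl⟩

@[simp]
theorem oneSkeleton_adj {u v : V} :
    (oneSkeleton X).Adj u v ↔ u ≠ v ∧ {u, v} ∈ X :=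
  Iff.rfl

def EdgeConnected (X : Set (Finset V)) : Prop :=
  ∀ a b, {a} ∈ X → {b} ∈ X → (oneSkeleton X).Reachable a b

/-- The empty face contributes `-1`, as a face of dimension `-1`; the value is junk (`0`) when
`X` is infinite. -/
noncomputable def reducedEulerChar (X : Set (Finset V)) : ℤ :=
  ∑ᶠ σ ∈ X, (-1) ^ (σ.card + 1)

theorem isComplex_univ : IsComplex (Set.univ : Set (Finset V)) :=
  fun _ _ _ _ => Set.mem_univ _

theorem edgeConnected_univ : EdgeConnected (Set.univ : Set (Finset V)) := by
  intro a b _ _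
  obtain rfl | hab := eq_or_ne a b
  exacts [.rfl, SimpleGraph.Adj.reachable (oneSkeleton_adj.mpr ⟨hab, Set.mem_univ _⟩)]

omit [DecidableEq V] in
theorem reducedEulerChar_univ [Fintype V] [Nonempty V] :
    reducedEulerChar (Set.univ : Set (Finset V)) = 0 := by
  rw [reducedEulerChar, finsum_mem_univ, finsum_eq_sum_of_fintype, ← Finset.powerset_univ]
  simp only [pow_succ, ← Finset.sum_mul,
    Finset.sum_powerset_neg_one_pow_card_of_nonempty Finset.univ_nonempty, zero_mul]

theorem IsFreeFace.exists_eq_insert {τ σ : Finset V} (hX : IsComplex X)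
    (h : IsFreeFace X τ σ) : ∃ c ∉ τ, σ = insert c τ := by
  obtain ⟨-, -, hσ, hτσ, huniq⟩ := h
  obtain ⟨c, hcσ, hcτ⟩ := Finset.exists_of_ssubset hτσ
  exact ⟨c, hcτ, (huniq _ (hX σ hσ _ (Finset.insert_subset hcσ hτσ.subset))
    (Finset.ssubset_insert hcτ)).symm⟩

theorem exists_ne_ssuperset_of_not_hasFreeFace {τ σ : Finset V}
    (hX : ¬HasFreeFace X) (hτ : τ ∈ X) (hτne : τ.Nonempty) (hσ : σ ∈ X) (hτσ : τ ⊂ σ) :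
    ∃ ρ ∈ X, τ ⊂ ρ ∧ ρ ≠ σ := by
  by_contra! hρ
  exact hX ⟨τ, σ, hτ, hτne, hσ, hτσ, hρ⟩

theorem EdgeConnected.exists_adj (hX : IsComplex X) (hC : EdgeConnected X) {e : Finset V}
    (he : e ∈ X) (he₁ : 1 < e.card) {a : V} (ha : {a} ∈ X) : ∃ b, (oneSkeleton X).Adj a b := by
  obtain ⟨b, hbe, hba⟩ := Finset.exists_mem_ne he₁ a
  have hab := hC a b ha (hX e he _ (Finset.singleton_subset_iff.mpr hbe))
  rw [SimpleGraph.reachable_iff_reflTransGen, Relation.ReflTransGen.cases_head_iff] at hab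
  obtain hab | ⟨c, hac, -⟩ := hab
  exacts [absurd hab.symm hba, ⟨c, hac⟩]

theorem EdgeConnected.of_retraction (hC : EdgeConnected X) (hYX : Y ⊆ X) (f : V → V)
    (hf : ∀ a, {a} ∈ Y → f a = a)
    (hadj : ∀ u v, (oneSkeleton X).Adj u v → (oneSkeleton Y).Reachable (f u) (f v)) :
    EdgeConnected Y := by
  intro a b ha hb
  have hab := ((oneSkeleton X).reachable_iff_reflTransGen a b).mp (hC a b (hYX ha) (hYX hb))
  have := hab.lift' f fun u v huv => ((oneSkeleton Y).reachable_iff_reflTransGen _ _).mp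
    (hadj u v huv)
  rwa [Function.onFun, ← SimpleGraph.reachable_iff_reflTransGen, hf a ha, hf b hb] at this

/-- Paths through the leaf `v` are retracted onto its neighbour `c`. -/
theorem EdgeConnected.diff_leaf (hC : EdgeConnected X) {v c : V}
    (hleaf : ∀ ρ ∈ X, {v} ⊂ ρ → ρ = {c, v}) : EdgeConnected (X \ {{v}, {c, v}}) := by
  refine hC.of_retraction Set.sdiff_subset (fun x => if x = v then c else x) ?_ ?_
  · rintro a ⟨-, ha⟩
    have hav : a ≠ v := by rintro rfl; exact ha (Or.inl rfl)
    exact if_neg hav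
  · intro u w huw_he
    obtain ⟨huw, he⟩ := oneSkeleton_adj.mp huw_he
    have hneighbour : ∀ x, x ≠ v → {x, v} ∈ X → x = c := by
      intro x hx hxv
      have hxe : x ∈ ({c, v} : Finset V) :=
        hleaf _ hxv (Finset.ssubset_insert (by simpa using hx)) ▸ Finset.mem_insert_self x {v}
      simpa [hx] using hxe
    by_cases hu : u = v
    · subst hu; simp [hneighbour w huw.symm (Finset.pair_comm u w ▸ he)]
    by_cases hw : w = v
    · subst hw; simp [hneighbour u huw he]
    have hv : v ∉ ({u, w} : Finset V) := by simp [Ne.symm hu, Ne.symm hw]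
    have hY : {u, w} ∈ X \ {{v}, {c, v}} := by
      refine ⟨he, ?_⟩
      rintro (h | h) <;> exact hv (h ▸ by simp)
    simpa [hu, hw] using SimpleGraph.Adj.reachable (oneSkeleton_adj.mpr ⟨huw, hY⟩)

/-- If `τ = {u, w}` is an edge, the path `u – c – w` replaces it. -/
theorem EdgeConnected.diff_pair_of_two_le_card (hX : IsComplex X) (hC : EdgeConnected X)
    {τ : Finset V} {c : V} (hσ : insert c τ ∈ X) (hc : c ∉ τ) (hτ : 2 ≤ τ.card) :
    EdgeConnected (X \ {τ, insert c τ}) := by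
  have hmem : ∀ ρ ∈ X, ρ.card ≤ 2 → ρ ≠ τ → ρ ∈ X \ {τ, insert c τ} := by
    intro ρ hρ hρ2 hρτ
    refine ⟨hρ, ?_⟩
    rintro (h | h)
    · exact hρτ h
    · rw [h, Finset.card_insert_of_notMem hc] at hρ2; omega
  refine hC.of_retraction Set.sdiff_subset id (fun _ _ => rfl) ?_
  intro u w huw_he
  obtain ⟨huw, he⟩ := oneSkeleton_adj.mp huw_he
  have hcard : ({u, w} : Finset V).card ≤ 2 := Finset.card_le_two
  obtain rfl | hτ' := eq_or_ne τ {u, w}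
  · have hapex : ∀ x ∈ ({u, w} : Finset V),
        (oneSkeleton (X \ {{u, w}, insert c {u, w}})).Adj c x := fun x hx =>
      oneSkeleton_adj.mpr ⟨fun h => hc (h ▸ hx),
        hmem _ (hX _ hσ _ (Finset.insert_subset_insert c (Finset.singleton_subset_iff.mpr hx)))
          Finset.card_le_two fun h => hc (h ▸ Finset.mem_insert_self c {x})⟩
    exact (hapex u (by simp)).symm.reachable.trans (hapex w (by simp)).reachable
  · exact SimpleGraph.Adj.reachable (oneSkeleton_adj.mpr ⟨huw, hmem _ he hcard hτ'.symm⟩)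

theorem CollapseStep.subset (h : CollapseStep X Y) : Y ⊆ X := by
  obtain ⟨τ, σ, -, rfl⟩ := h
  exact Set.sdiff_subset

theorem CollapseStep.isComplex (hX : IsComplex X) (h : CollapseStep X Y) : IsComplex Y := by
  obtain ⟨τ, σ, ⟨-, -, -, hτσ, huniq⟩, rfl⟩ := h
  rintro ρ ⟨hρ, hρ'⟩ π hπρ
  refine ⟨hX ρ hρ π hπρ, fun hπ => hρ' ?_⟩
  have hτρ : τ ⊆ ρ := by
    rcases hπ with rfl | rfl
    exacts [hπρ, hτσ.subset.trans hπρ]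
  have hρτ : ρ ≠ τ := fun h => hρ' (Or.inl h)
  exact Or.inr (huniq ρ hρ (Finset.ssubset_iff_subset_ne.mpr ⟨hτρ, hρτ.symm⟩))

theorem CollapseStep.edgeConnected (hX : IsComplex X) (hC : EdgeConnected X)
    (h : CollapseStep X Y) : EdgeConnected Y := by
  obtain ⟨τ, σ, hf, rfl⟩ := h
  obtain ⟨c, hc, rfl⟩ := hf.exists_eq_insert hX
  obtain ⟨-, hτne, hσ, -, huniq⟩ := hf
  obtain hτ₁ | hτ₂ := (Nat.one_le_iff_ne_zero.mpr hτne.card_ne_zero).eq_or_lt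
  · obtain ⟨v, rfl⟩ := Finset.card_eq_one.mp hτ₁.symm
    exact hC.diff_leaf huniq
  · exact hC.diff_pair_of_two_le_card hX hσ hc hτ₂

theorem CollapseStep.reducedEulerChar_eq (hX : IsComplex X) (hfin : X.Finite)
    (h : CollapseStep X Y) : reducedEulerChar Y = reducedEulerChar X := by
  obtain ⟨τ, σ, hf, rfl⟩ := h
  have hτσ : {τ, σ} ⊆ X := Set.insert_subset hf.1 (Set.singleton_subset_iff.mpr hf.2.2.1)
  obtain ⟨c, hc, rfl⟩ := hf.exists_eq_insert hX
  have hpair : ∑ᶠ ρ ∈ ({τ, insert c τ} : Set (Finset V)), (-1 : ℤ) ^ (ρ.card + 1) = 0 := by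
    rw [finsum_mem_pair (Finset.ssubset_insert hc).ne, Finset.card_insert_of_notMem hc]
    ring
  rw [reducedEulerChar, reducedEulerChar, ← finsum_mem_add_sdiff hτσ hfin, hpair, zero_add]

theorem CollapsesTo.subset (h : CollapsesTo X Y) : Y ⊆ X := by
  induction h with
  | refl => exact subset_rfl
  | tail _ hstep ih => exact hstep.subset.trans ih

theorem CollapsesTo.isComplex (hX : IsComplex X) (h : CollapsesTo X Y) : IsComplex Y := by
  induction h with
  | refl => exact hX
  | tail _ hstep ih => exact hstep.isComplex ih

theorem CollapsesTo.edgeConnected (hX : IsComplex X) (hC : EdgeConnected X)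
    (h : CollapsesTo X Y) : EdgeConnected Y := by
  induction h with
  | refl => exact hC
  | tail hXZ hstep ih => exact hstep.edgeConnected (CollapsesTo.isComplex hX hXZ) ih

theorem CollapsesTo.reducedEulerChar_eq (hX : IsComplex X) (hfin : X.Finite)
    (h : CollapsesTo X Y) : reducedEulerChar Y = reducedEulerChar X := by
  induction h with
  | refl => rfl
  | tail hXZ hstep ih =>
    exact (hstep.reducedEulerChar_eq (CollapsesTo.isComplex hX hXZ)
      (hfin.subset (CollapsesTo.subset hXZ))).trans ih

theorem reducedEulerChar_neg_of_two_cofaces (hfin : Y.Finite)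
    (hemp : ∅ ∈ Y) (hdim : ∀ σ ∈ Y, σ.card ≤ 2)
    (hdeg : ∀ v ∈ Y, v.card = 1 → ∃ e₁ ∈ Y, ∃ e₂ ∈ Y, e₁ ≠ e₂ ∧ v ⊂ e₁ ∧ v ⊂ e₂) :
    reducedEulerChar Y < 0 := by
  classical
  set faces : ℕ → Finset (Finset V) := fun k => {σ ∈ hfin.toFinset | σ.card = k}
  have hsum : reducedEulerChar Y =
      -((faces 0).card : ℤ) + (faces 1).card - (faces 2).card := by
    rw [reducedEulerChar, finsum_mem_eq_finite_toFinset_sum _ hfin,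
      ← Finset.sum_fiberwise_of_maps_to' (s := hfin.toFinset) (t := Finset.range 3)
        (g := Finset.card) (f := fun k => (-1 : ℤ) ^ (k + 1))
        fun σ hσ => Finset.mem_range.mpr (Nat.lt_succ_of_le (hdim σ (by simpa using hσ)))]
    simp only [Finset.sum_range_succ, Finset.range_zero, Finset.sum_empty, Finset.sum_const,
      nsmul_eq_mul, faces]
    ring
  have hempty : 1 ≤ (faces 0).card :=
    Finset.card_pos.mpr ⟨∅, by simp [faces, hemp]⟩
  have hcount : (faces 1).card * 2 ≤ (faces 2).card * 2 := by
    refine Finset.card_mul_le_card_mul (· ⊂ ·) ?_ ?_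
    · intro v hv
      simp only [faces, Finset.mem_filter, Set.Finite.mem_toFinset] at hv
      obtain ⟨e₁, he₁, e₂, he₂, hne, hv₁, hv₂⟩ := hdeg v hv.1 hv.2
      have hedge : ∀ e ∈ Y, v ⊂ e → e ∈ faces 2 := fun e he hve => by
        have := Finset.card_lt_card hve
        simp only [faces, Finset.mem_filter, Set.Finite.mem_toFinset]
        exact ⟨he, by have := hdim e he; omega⟩
      exact Finset.one_lt_card.mpr ⟨e₁, by simp [Finset.bipartiteAbove, hedge e₁ he₁ hv₁, hv₁],
        e₂, by simp [Finset.bipartiteAbove, hedge e₂ he₂ hv₂, hv₂], hne⟩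
    · intro e he
      simp only [faces, Finset.mem_filter] at he
      calc (Finset.bipartiteBelow (· ⊂ ·) (faces 1) e).card
          ≤ (e.powersetCard 1).card := Finset.card_le_card fun v hv => by
            simp only [Finset.bipartiteBelow, faces, Finset.mem_filter] at hv
            exact Finset.mem_powersetCard.mpr ⟨hv.2.subset, hv.1.2⟩
        _ = 2 := by simp [he.2]
  omega

end

/-- If the simplex on `n` vertices (here: on an arbitrary finite vertex set) collapses
to a complex of dimension exactly `1`, then that complex has a free face. -/
theorem stmt_3 {V : Type*} [Fintype V] [DecidableEq V] (Y : Set (Finset V))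
    (h : CollapsesTo (Set.univ : Set (Finset V)) Y)
    (hdim : Dim Y 1) :
    HasFreeFace Y := by
  obtain ⟨⟨e, he, he₂⟩, hdim⟩ := hdim
  have : Nonempty V := ⟨(Finset.card_pos.mp (by omega : 0 < e.card)).choose⟩
  have hY : IsComplex Y := h.isComplex isComplex_univ
  have hC : EdgeConnected Y := h.edgeConnected isComplex_univ edgeConnected_univ
  have hχ : reducedEulerChar Y = 0 := by
    rw [h.reducedEulerChar_eq isComplex_univ Set.finite_univ, reducedEulerChar_univ]
  by_contra hfree
  refine (hχ ▸ reducedEulerChar_neg_of_two_cofaces (Set.toFinite Y)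
    (hY e he ∅ (Finset.empty_subset e)) hdim ?_).false
  intro v hv hv₁
  obtain ⟨a, rfl⟩ := Finset.card_eq_one.mp hv₁
  obtain ⟨b, hab⟩ := hC.exists_adj hY he (by omega) hv
  rw [oneSkeleton_adj, Finset.pair_comm] at hab
  have hab' : {a} ⊂ ({b, a} : Finset V) := Finset.ssubset_insert (by simpa using hab.1.symm)
  obtain ⟨ρ, hρ, haρ, hρb⟩ :=
    exists_ne_ssuperset_of_not_hasFreeFace hfree hv (Finset.singleton_nonempty a) hab.2 hab'
  exact ⟨_, hab.2, ρ, hρ, hρb.symm, hab', haρ⟩
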